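/- The infinite three-color Tantrix rotation puzzle problem Inf-3-TRP is undecidable: there is no computable function d : ℕ → Bool such that for every e ∈ ℕ for which the e-th partial computable function is total and computes (under the fixed encodings) a function 𝒜 : ℤ² → Option T_3, d(e) = true holds if and only if the rotation puzzle 𝒜 has a solution. -/

import Mathlib

/-- The Tantrix colors used in the tile set. -/
inductive Color where
  | red
  | yellow
  | blue
deriving DecidableEq

/-- A tile is its clockwise color sequence: a word of length 6 over the colors,
edges indexed `0, …, 5` clockwise. -/
abbrev Tile := Fin 6 → Color

/-- Cyclic rotation of a tile by `k` steps: edge `i` of the rotated tile carries the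
color of edge `i + k` of the original sequence.  Two solutions are compared as the
assigned rotated color sequences. -/
def rotTile (k : Fin 6) (t : Tile) : Tile := fun i => t (i + k)

open Color in
/-- The tile set T3: the color sequences yrrbby, ryybbr, yrrybb, ryyrbb, brrbyy, yrbybr, rbyryb, brybyr, brbyyr, bybrry, ryrbby, rbryyb, ybyrrb, yrybbr. -/
def T3 : Set Tile :=
  { ![yellow,red,red,blue,blue,yellow],
    ![red,yellow,yellow,blue,blue,red],
    ![yellow,red,red,yellow,blue,blue],
    ![red,yellow,yellow,red,blue,blue],
    ![blue,red,red,blue,yellow,yellow],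
    ![yellow,red,blue,yellow,blue,red],
    ![red,blue,yellow,red,yellow,blue],
    ![blue,red,yellow,blue,yellow,red],
    ![blue,red,blue,yellow,yellow,red],
    ![blue,yellow,blue,red,red,yellow],
    ![red,yellow,red,blue,blue,yellow],
    ![red,blue,red,yellow,yellow,blue],
    ![yellow,blue,yellow,red,red,blue],
    ![yellow,red,yellow,blue,blue,red] }

/-- The six neighbor offsets of the hexagonal layout of `ℤ²`, listed clockwise
starting from straight up; edge `i` of a tile at `x` is the edge shared with the
neighboring point `x + dirs i`, and opposite directions differ by `3` (mod 6).
Two points are neighbors exactly if their difference is one of these offsets. -/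
def dirs : Fin 6 → ℤ × ℤ := ![(0,1), (1,1), (1,0), (0,-1), (-1,-1), (-1,0)]

/-- An explicit numeric code for a color. -/
def Color.toNat : Color → ℕ
  | .red => 0
  | .yellow => 1
  | .blue => 2

/-- An explicit encoding of tiles into `ℕ`. -/
def encTile (t : Tile) : ℕ :=
  ∑ i : Fin 6, (t i).toNat * 3 ^ (i : ℕ)


/-- Tiles belonging to the tile set `T3`. -/
abbrev SetTile := {t : Tile // t ∈ T3}

/-- An explicit encoding of `Option SetTile` into `ℕ`. -/
def encOptTile : Option SetTile → ℕ
  | none => 0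
  | some t => encTile t.1 + 1

/-- `sol` is a solution of the (possibly infinite) rotation-puzzle instance
`A : ℤ × ℤ → Option SetTile`: it assigns to each occupied point a cyclic rotation
of the tile placed there, such that for every pair of neighboring occupied points
the two assigned sequences give the same color to their joint edge (edge `d` of
the tile at `x` is glued to edge `d + 3` of the tile at `x + dirs d`). -/
def InfSolution (A : ℤ × ℤ → Option SetTile) (sol : ℤ × ℤ → Option Tile) : Prop :=
  (∀ x, (A x = none → sol x = none) ∧
    (∀ t : SetTile, A x = some t → ∃ k : Fin 6, sol x = some (rotTile k t.1))) ∧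
  (∀ (x : ℤ × ℤ) (d : Fin 6) (s s' : Tile),
    sol x = some s → sol (x + dirs d) = some s' → s d = s' (d + 3))

/-! A program `c` is turned, uniformly and computably, into the instance that places a fixed
cluster of four tiles of `T3` at the points `(2k, 0), (2k, 1), (2k + 1, 1), (2k + 1, 0)` for every
`k` by which `c` has halted on input `0`, and leaves the board empty elsewhere. The cluster admits
no rotations matching its five inner edges, so the instance is solvable (by the empty assignment)
exactly when `c` never halts; a decider for `Inf-3-TRP` would therefore decide the halting
problem. -/

open Nat.Partrec.Code in
theorem Nat.Partrec.Code.exists_computable_code {α : Type*} [Primcodable α] {f : α → ℕ → ℕ}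
    (hf : Computable₂ f) :
    ∃ g : α → Code, Computable g ∧ ∀ a n, (g a).eval n = Part.some (f a n) := by
  obtain ⟨c, hc⟩ := exists_code.1 hf.partrec₂
  exact ⟨fun a => curry c (Encodable.encode a),
    (primrec₂_curry.comp (_root_.Primrec.const c) _root_.Primrec.encode).to_comp,
    fun a n => by simp [eval_curry, hc]⟩

namespace Tantrix

open Color

theorem infSolution_none_of_forall_eq_none {A : ℤ × ℤ → Option SetTile} (hA : ∀ x, A x = none) :
    InfSolution A fun _ => none :=
  ⟨fun x => ⟨fun _ => rfl, fun t ht => by simp [hA x] at ht⟩, fun _ _ _ _ h => by cases h⟩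

def yrrbby : SetTile := ⟨![yellow, red, red, blue, blue, yellow], by simp [T3]⟩
def yrrybb : SetTile := ⟨![yellow, red, red, yellow, blue, blue], by simp [T3]⟩
def ryyrbb : SetTile := ⟨![red, yellow, yellow, red, blue, blue], by simp [T3]⟩
def brrbyy : SetTile := ⟨![blue, red, red, blue, yellow, yellow], by simp [T3]⟩

theorem cluster_no_matching_rotations (a b c d : Fin 6) :
    ¬(rotTile a yrrbby.1 0 = rotTile b yrrybb.1 3 ∧ rotTile a yrrbby.1 1 = rotTile c ryyrbb.1 4 ∧
      rotTile a yrrbby.1 2 = rotTile d brrbyy.1 5 ∧ rotTile b yrrybb.1 2 = rotTile c ryyrbb.1 5 ∧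
      rotTile d brrbyy.1 0 = rotTile c ryyrbb.1 3) := by
  revert a b c d
  decide

theorem not_exists_infSolution_of_cluster {A : ℤ × ℤ → Option SetTile} (x y : ℤ)
    (ha : A (x, y) = some yrrbby) (hb : A (x, y + 1) = some yrrybb)
    (hc : A (x + 1, y + 1) = some ryyrbb) (hd : A (x + 1, y) = some brrbyy) :
    ¬∃ sol, InfSolution A sol := by
  rintro ⟨sol, hrot, hmatch⟩
  obtain ⟨a, hsa⟩ := (hrot _).2 _ ha
  obtain ⟨b, hsb⟩ := (hrot _).2 _ hb
  obtain ⟨c, hsc⟩ := (hrot _).2 _ hc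
  obtain ⟨d, hsd⟩ := (hrot _).2 _ hd
  have edge (p q : ℤ × ℤ) (i : Fin 6) (hq : p + dirs i = q) {s s'} (hs : sol p = some s)
      (hs' : sol q = some s') : s i = s' (i + 3) := hmatch p i s s' hs (hq ▸ hs')
  exact cluster_no_matching_rotations a b c d
    ⟨edge _ _ 0 (by simp [dirs]) hsa hsb, edge _ _ 1 (by simp [dirs]) hsa hsc,
      edge _ _ 2 (by simp [dirs]) hsa hsd, edge _ _ 2 (by simp [dirs]) hsb hsc,
      edge _ _ 0 (by simp [dirs]) hsd hsc⟩

/-- The cluster in terms of point codes: `ℤ` encodes `n ≥ 0` as `2n`, so columns `2k`, `2k + 1`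
have codes `4k`, `4k + 2` (here reduced mod 4) and rows `0`, `1` have codes `0`, `2`. -/
def clusterAt (col row : ℕ) : Option SetTile :=
  if row = 0 then (if col = 0 then some yrrbby else if col = 2 then some brrbyy else none)
  else if row = 2 then (if col = 0 then some yrrybb else if col = 2 then some ryyrbb else none)
  else none

theorem primrec₂_encOptTile_clusterAt :
    Primrec₂ fun col row => encOptTile (clusterAt col row) := by
  have eq (f : ℕ × ℕ → ℕ) (hf : Primrec f) (n : ℕ) : PrimrecPred fun p => f p = n :=
    Primrec.eq.comp hf (Primrec.const n)
  have col := eq _ Primrec.fst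
  have row := eq _ Primrec.snd
  exact (Primrec.ite (row 0)
    (Primrec.ite (col 0) (Primrec.const _) (Primrec.ite (col 2) (Primrec.const _) (Primrec.const _)))
    (Primrec.ite (row 2)
      (Primrec.ite (col 0) (Primrec.const _) (Primrec.ite (col 2) (Primrec.const _) (Primrec.const _)))
      (Primrec.const _))).of_eq fun p => by
    simp only [clusterAt, apply_ite encOptTile]
    rfl

open Nat.Partrec (Code)
open Nat.Partrec.Code

/-- The instance attached to the program `c`, read on the code `⟪col, row⟫` of a point. -/
def haltingPuzzle (c : Code) (n : ℕ) : Option SetTile :=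
  if (evaln (n.unpair.1 / 4) c 0).isSome then clusterAt (n.unpair.1 % 4) n.unpair.2 else none

theorem primrec₂_encOptTile_haltingPuzzle :
    Primrec₂ fun c n => encOptTile (haltingPuzzle c n) := by
  have col : Primrec fun p : Code × ℕ => p.2.unpair.1 :=
    Primrec.fst.comp (Primrec.unpair.comp Primrec.snd)
  have row : Primrec fun p : Code × ℕ => p.2.unpair.2 :=
    Primrec.snd.comp (Primrec.unpair.comp Primrec.snd)
  have halted : PrimrecPred fun p : Code × ℕ => (evaln (p.2.unpair.1 / 4) p.1 0).isSome :=
    Primrec.eq.comp (Primrec.option_isSome.comp (primrec_evaln.comp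
      (((Primrec.nat_div.comp col (Primrec.const 4)).pair Primrec.fst).pair (Primrec.const 0))))
      (Primrec.const true)
  exact (Primrec.ite halted
    (primrec₂_encOptTile_clusterAt.comp (Primrec.nat_mod.comp col (Primrec.const 4)) row)
    (Primrec.const (encOptTile none))).of_eq fun p => by
      simp only [haltingPuzzle, apply_ite encOptTile]

theorem haltingPuzzle_eq_none {c : Code} (h : ¬(eval c 0).Dom) (n : ℕ) :
    haltingPuzzle c n = none := by
  have hk : ∀ k, (evaln k c 0).isSome = false := fun k => by
    rw [Option.isSome_eq_false_iff, Option.isNone_iff_eq_none, Option.eq_none_iff_forall_not_mem]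
    exact fun x hx => h (Part.dom_iff_mem.2 ⟨x, evaln_sound hx⟩)
  simp [haltingPuzzle, hk]

theorem encode_natCast_prod (m j : ℕ) :
    Encodable.encode ((m : ℤ), (j : ℤ)) = Nat.pair (2 * m) (2 * j) := rfl

theorem haltingPuzzle_encode_natCast {c : Code} {k : ℕ} (hk : (evaln k c 0).isSome) (i : ℕ)
    (hi : i < 2) (j : ℕ) :
    haltingPuzzle c (Encodable.encode (((2 * k + i : ℕ) : ℤ), (j : ℤ))) =
      clusterAt (2 * i) (2 * j) := by
  have hcol : 2 * (2 * k + i) = 4 * k + 2 * i := by ring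
  rw [encode_natCast_prod, haltingPuzzle, Nat.unpair_pair, hcol,
    Nat.mul_add_div (by norm_num), Nat.mul_add_mod, Nat.div_eq_of_lt (by omega),
    Nat.mod_eq_of_lt (by omega), add_zero, if_pos hk]

theorem exists_infSolution_haltingPuzzle_iff (c : Code) :
    (∃ sol, InfSolution (fun z => haltingPuzzle c (Encodable.encode z)) sol) ↔
      ¬(eval c 0).Dom := by
  refine ⟨fun hsol hdom => ?_, fun h => ⟨_, infSolution_none_of_forall_eq_none fun z => haltingPuzzle_eq_none h _⟩⟩
  obtain ⟨x, hx⟩ := Part.dom_iff_mem.1 hdom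
  obtain ⟨k, hk⟩ := evaln_complete.1 hx
  have cluster := haltingPuzzle_encode_natCast (Option.isSome_iff_exists.2 ⟨x, hk⟩)
  refine not_exists_infSolution_of_cluster ((2 * k : ℕ) : ℤ) 0 ?_ ?_ ?_ ?_ hsol
  · simpa [clusterAt] using cluster 0 (by norm_num) 0
  · simpa [clusterAt] using cluster 0 (by norm_num) 1
  · simpa [clusterAt] using cluster 1 (by norm_num) 1
  · simpa [clusterAt] using cluster 1 (by norm_num) 0

end Tantrix

open Tantrix Nat.Partrec in
/-- the infinite three-color Tantrix rotation puzzle problem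
`Inf-3-TRP` is undecidable: there is no computable `d : ℕ → Bool` such that whenever
the `e`-th partial computable function (in the standard enumeration by
`Nat.Partrec.Code`) is total and computes, under the fixed encodings, a function
`A : ℤ × ℤ → Option SetTile`, then `d e = true` holds iff the rotation puzzle `A` has a
solution. -/
theorem inf_trp_undecidable :
    ¬ ∃ d : ℕ → Bool, Computable d ∧
      ∀ (e : ℕ) (A : ℤ × ℤ → Option SetTile),
        (∀ m : ℕ, ((Denumerable.ofNat Nat.Partrec.Code e).eval m).Dom) →
        (∀ x : ℤ × ℤ,
          (Denumerable.ofNat Nat.Partrec.Code e).eval (Encodable.encode x) =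
            Part.some (encOptTile (A x))) →
        (d e = true ↔ ∃ sol : ℤ × ℤ → Option Tile, InfSolution A sol) := by
  rintro ⟨d, hd, hdecides⟩
  obtain ⟨code, hcode, heval⟩ :=
    Code.exists_computable_code primrec₂_encOptTile_haltingPuzzle.to_comp
  have hdecides_halting (c : Code) : d (Encodable.encode (code c)) = true ↔ ¬(c.eval 0).Dom := by
    rw [hdecides _ (fun z => haltingPuzzle c (Encodable.encode z)) (by simp [heval])
      (by simp [heval]), exists_infSolution_haltingPuzzle_iff]
  have hcomputable : ComputablePred fun c : Code => ¬(c.eval 0).Dom :=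
    ComputablePred.computable_iff.2 ⟨_, hd.comp (Computable.encode.comp hcode),
      funext fun c => propext (hdecides_halting c).symm⟩
  exact ComputablePred.halting_problem 0 (hcomputable.not.of_eq fun _ => not_not)
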